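/- arXiv:2010.13514 — 3 statements merged into one kernel-verified Lean document; each statement's English description precedes it below -/
import Mathlib

section
/- Under the STN perturbed training objective for ridge regression, the stationary point in w₀ is biased: for fixed λ₀ > 0, Θ ∈ ℝ^m, σ > 0 and scalar Gaussian ε ~ N(0, σ²), the minimizer over w₀ of E_ε[(1/2n)‖X(w₀+Θε) − t‖² + ((λ₀+ε)/2n)‖w₀+Θε‖²] is w₀* = (XᵀX + λ₀I)⁻¹(Xᵀt − σ²Θ), which differs from the ridge solution (XᵀX + λ₀I)⁻¹Xᵀt whenever Θ ≠ 0. -/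
/-!
Expanding the integrand in `ε` gives a cubic polynomial in `ε`. The odd Gaussian moments vanish
and `E ε² = σ²`; the `ε²` coefficient contains `2⟨w₀, Θ⟩`, coming from the penalty weight `ε`
multiplying the cross term `2ε⟨w₀, Θ⟩` of `‖w₀ + εΘ‖²`. Hence, with `A = XᵀX + λ₀I`, the
objective is `(1/2n) (w₀ᵀ A w₀ - 2 w₀ᵀ (Xᵀt - σ²Θ))` plus a constant. `A` is positive definite, so
completing the square shows that `A⁻¹ (Xᵀt - σ²Θ)` is the unique minimizer, and it differs from the
ridge solution `A⁻¹ Xᵀt` by `σ² A⁻¹ Θ ≠ 0`.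
-/

open Matrix MeasureTheory ProbabilityTheory
open scoped NNReal

namespace ProbabilityTheory

variable {μ : ℝ} {v : ℝ≥0}

lemma integrable_pow_gaussianReal (k : ℕ) :
    Integrable (fun x ↦ x ^ k) (gaussianReal μ v) :=
  integrable_pow_of_mem_interior_integrableExpSet (by simp) k

lemma integral_pow_gaussianReal_of_odd {k : ℕ} (hk : Odd k) :
    ∫ x, x ^ k ∂gaussianReal 0 v = 0 := by
  have h : ∫ x, (-x) ^ k ∂gaussianReal 0 v = ∫ x, x ^ k ∂gaussianReal 0 v := by
    rw [← integral_map (f := fun x ↦ x ^ k) measurable_neg.aemeasurable (by fun_prop),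
      gaussianReal_map_neg, neg_zero]
  simp only [hk.neg_pow, integral_neg] at h
  linarith

lemma integral_sq_gaussianReal : ∫ x, x ^ 2 ∂gaussianReal 0 v = v := by
  rw [← variance_of_integral_eq_zero aemeasurable_id' integral_id_gaussianReal,
    variance_fun_id_gaussianReal]

lemma integral_cubic_gaussianReal (a b c d : ℝ) :
    ∫ x, a + b * x + c * x ^ 2 + d * x ^ 3 ∂gaussianReal 0 v = a + c * v := by
  have hpow (k : ℕ) : Integrable (fun x ↦ x ^ k) (gaussianReal 0 v) :=
    integrable_pow_gaussianReal k
  have hid : Integrable (fun x : ℝ ↦ x) (gaussianReal 0 v) := by simpa using hpow 1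
  have h₁ : Integrable (fun x ↦ a + b * x) (gaussianReal 0 v) :=
    (integrable_const a).add (hid.const_mul b)
  have h₂ : Integrable (fun x ↦ a + b * x + c * x ^ 2) (gaussianReal 0 v) :=
    h₁.add ((hpow 2).const_mul c)
  rw [integral_add h₂ ((hpow 3).const_mul d), integral_add h₁ ((hpow 2).const_mul c),
    integral_add (integrable_const a) (hid.const_mul b), integral_const_mul, integral_const_mul,
    integral_const_mul, integral_id_gaussianReal, integral_sq_gaussianReal,
    integral_pow_gaussianReal_of_odd (by decide)]
  simp

end ProbabilityTheory

namespace Matrix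

variable {ι κ : Type*} [Fintype ι] [Fintype κ]

lemma IsSymm.dotProduct_mulVec_comm {A : Matrix ι ι ℝ} (hA : A.IsSymm) (u w : ι → ℝ) :
    u ⬝ᵥ A *ᵥ w = w ⬝ᵥ A *ᵥ u := by
  rw [dotProduct_mulVec, ← mulVec_transpose, hA.eq, dotProduct_comm]

lemma PosDef.quadratic_lt_of_mulVec_eq {A : Matrix ι ι ℝ} (hA : A.PosDef) {w b : ι → ℝ}
    (hw : A *ᵥ w = b) {u : ι → ℝ} (hu : u ≠ w) :
    w ⬝ᵥ A *ᵥ w - 2 * (w ⬝ᵥ b) < u ⬝ᵥ A *ᵥ u - 2 * (u ⬝ᵥ b) := by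
  have hsymm : A.IsSymm := by simpa using hA.isHermitian
  have hexcess : u ⬝ᵥ A *ᵥ u - 2 * (u ⬝ᵥ b) - (w ⬝ᵥ A *ᵥ w - 2 * (w ⬝ᵥ b))
      = (u - w) ⬝ᵥ A *ᵥ (u - w) := by
    rw [mulVec_sub, dotProduct_sub, sub_dotProduct, sub_dotProduct,
      hsymm.dotProduct_mulVec_comm w u, hw]
    ring
  have := hA.dotProduct_mulVec_pos (sub_ne_zero.mpr hu)
  rw [star_trivial] at this
  linarith

lemma sum_sq_eq_dotProduct_self (r : ι → ℝ) : ∑ i, r i ^ 2 = r ⬝ᵥ r := by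
  simp [dotProduct, sq]

lemma add_smul_dotProduct_add_smul (p q : ι → ℝ) (c : ℝ) :
    (p + c • q) ⬝ᵥ (p + c • q) = p ⬝ᵥ p + 2 * c * (p ⬝ᵥ q) + c ^ 2 * (q ⬝ᵥ q) := by
  simp only [add_dotProduct, dotProduct_add, smul_dotProduct, dotProduct_smul, smul_eq_mul,
    dotProduct_comm q p]
  ring

variable [DecidableEq ι] (X : Matrix κ ι ℝ)

lemma posDef_transpose_mul_self_add_smul_one {lam : ℝ} (hlam : 0 < lam) :
    (Xᵀ * X + lam • (1 : Matrix ι ι ℝ)).PosDef := by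
  simpa using PosDef.posSemidef_add (posSemidef_conjTranspose_mul_self X) (PosDef.one.smul hlam)

lemma ridge_loss_eq (t : κ → ℝ) (lam : ℝ) (w : ι → ℝ) :
    (X *ᵥ w - t) ⬝ᵥ (X *ᵥ w - t) + lam * (w ⬝ᵥ w)
      = w ⬝ᵥ (Xᵀ * X + lam • (1 : Matrix ι ι ℝ)) *ᵥ w - 2 * (w ⬝ᵥ Xᵀ *ᵥ t) + t ⬝ᵥ t := by
  have hgram : w ⬝ᵥ (Xᵀ * X) *ᵥ w = X *ᵥ w ⬝ᵥ X *ᵥ w := by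
    rw [← mulVec_mulVec, dotProduct_mulVec, vecMul_transpose]
  have hcross : w ⬝ᵥ Xᵀ *ᵥ t = X *ᵥ w ⬝ᵥ t := by
    rw [dotProduct_mulVec, vecMul_transpose]
  rw [add_mulVec, dotProduct_add, hgram, smul_mulVec, one_mulVec, dotProduct_smul, hcross,
    sub_dotProduct, dotProduct_sub, dotProduct_sub, dotProduct_comm t, smul_eq_mul]
  ring

end Matrix

theorem integral_stn_objective_gaussianReal {ι κ : Type*} [Fintype ι] [Fintype κ]
    [DecidableEq ι] (v : ℝ≥0) (N lam : ℝ) (X : Matrix κ ι ℝ) (t : κ → ℝ) (Θ w : ι → ℝ) :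
    ∫ e, ((1 / N) * ∑ i, (X.mulVec (w + e • Θ) i - t i) ^ 2
        + ((lam + e) / N) * ∑ j, ((w + e • Θ) j) ^ 2) ∂gaussianReal 0 v
      = (1 / N) * (w ⬝ᵥ (Xᵀ * X + lam • (1 : Matrix ι ι ℝ)) *ᵥ w
          - 2 * (w ⬝ᵥ (Xᵀ *ᵥ t - (v : ℝ) • Θ)))
        + (1 / N) * (t ⬝ᵥ t + v * (X *ᵥ Θ ⬝ᵥ X *ᵥ Θ + lam * (Θ ⬝ᵥ Θ))) := by
  set r := X *ᵥ w - t
  set p := X *ᵥ Θ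
  have hresidual (e : ℝ) : X *ᵥ (w + e • Θ) - t = r + e • p := by
    rw [mulVec_add, mulVec_smul, add_sub_right_comm]
  have hintegrand (e : ℝ) :
      (1 / N) * ∑ i, ((X *ᵥ (w + e • Θ)) i - t i) ^ 2 + ((lam + e) / N) * ∑ j, ((w + e • Θ) j) ^ 2
        = (1 / N) * (r ⬝ᵥ r + lam * (w ⬝ᵥ w))
          + (1 / N) * (2 * (r ⬝ᵥ p) + w ⬝ᵥ w + 2 * lam * (w ⬝ᵥ Θ)) * e
          + (1 / N) * (p ⬝ᵥ p + 2 * (w ⬝ᵥ Θ) + lam * (Θ ⬝ᵥ Θ)) * e ^ 2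
          + (1 / N) * (Θ ⬝ᵥ Θ) * e ^ 3 := by
    have hsq : ∑ i, ((X *ᵥ (w + e • Θ)) i - t i) ^ 2 = (r + e • p) ⬝ᵥ (r + e • p) := by
      rw [← hresidual]; exact sum_sq_eq_dotProduct_self _
    rw [hsq, sum_sq_eq_dotProduct_self, add_smul_dotProduct_add_smul, add_smul_dotProduct_add_smul]
    ring
  simp_rw [hintegrand, integral_cubic_gaussianReal, dotProduct_sub, dotProduct_smul, smul_eq_mul]
  linear_combination (1 / N) * ridge_loss_eq X t lam w

/-- Under the STN perturbed training objective for ridge regression, with scalar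
Gaussian perturbation `ε ~ N(0, σ²)`, the stationary point in `w₀` is biased:
the unique minimizer over `w₀` of
`E_ε[(1/2n)‖X(w₀+Θε) − t‖² + ((λ₀+ε)/2n)‖w₀+Θε‖²]`
is `w₀* = (XᵀX + λ₀I)⁻¹(Xᵀt − σ²Θ)`, which differs from the ridge solution
`(XᵀX + λ₀I)⁻¹Xᵀt` whenever `Θ ≠ 0`. -/
theorem stn_objective_biased_fixed_point {n m : ℕ} (hn : 0 < n)
    (X : Matrix (Fin n) (Fin m) ℝ) (t : Fin n → ℝ)
    (lam₀ : ℝ) (hlam : 0 < lam₀)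
    (Θ : Fin m → ℝ) (σ : ℝ) (hσ : 0 < σ)
    (F : (Fin m → ℝ) → ℝ)
    (hF : ∀ w₀, F w₀ = ∫ e,
      ((1 / (2 * n)) * ∑ i, (X.mulVec (w₀ + e • Θ) i - t i) ^ 2
        + ((lam₀ + e) / (2 * n)) * ∑ j, ((w₀ + e • Θ) j) ^ 2)
      ∂(gaussianReal 0 ⟨σ ^ 2, sq_nonneg σ⟩))
    (wstar : Fin m → ℝ)
    (hwstar : wstar = (Xᵀ * X + lam₀ • (1 : Matrix (Fin m) (Fin m) ℝ))⁻¹.mulVec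
      (Xᵀ.mulVec t - σ ^ 2 • Θ)) :
    (∀ w₀, w₀ ≠ wstar → F wstar < F w₀) ∧
    (Θ ≠ 0 → wstar ≠
      (Xᵀ * X + lam₀ • (1 : Matrix (Fin m) (Fin m) ℝ))⁻¹.mulVec (Xᵀ.mulVec t)) := by
  set A := Xᵀ * X + lam₀ • (1 : Matrix (Fin m) (Fin m) ℝ)
  have hA : A.PosDef := posDef_transpose_mul_self_add_smul_one X hlam
  have hsolve (b : Fin m → ℝ) : A *ᵥ (A⁻¹ *ᵥ b) = b := by
    rw [mulVec_mulVec, mul_nonsing_inv _ hA.det_pos.ne'.isUnit, one_mulVec]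
  have hAw : A *ᵥ wstar = Xᵀ *ᵥ t - σ ^ 2 • Θ := hwstar ▸ hsolve _
  have hobjective (w : Fin m → ℝ) :=
    (hF w).trans (integral_stn_objective_gaussianReal _ _ _ _ _ _ _)
  refine ⟨fun w hw => ?_, fun hΘ hridge => ?_⟩
  · have hN : (0 : ℝ) < 1 / (2 * n) := by positivity
    rw [hobjective, hobjective]
    exact add_lt_add_left (mul_lt_mul_of_pos_left (hA.quadratic_lt_of_mulVec_eq hAw hw) hN) _
  · rw [hridge, hsolve, eq_comm, sub_eq_self, smul_eq_zero] at hAw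
    exact hAw.elim (pow_ne_zero 2 hσ.ne') hΘ
end

section
/- One gradient descent step on the uncentered STN hypernetwork slope: if Φ⁽¹⁾ = Φ⁽⁰⁾ − α (∇_w L_T(λ⁽⁰⁾, w⁽⁰⁾)) (λ⁽⁰⁾)ᵀ where w⁽⁰⁾ = Φ⁽⁰⁾λ⁽⁰⁾ + φ₀, then for any λ and any differentiable L_V, the gradient of λ ↦ L_V(r_{Φ⁽¹⁾,φ₀}(λ)) equals (Φ⁽⁰⁾)ᵀ∇_w L_V(w⁽¹⁾) − α·⟨∇_w L_T(λ⁽⁰⁾, w⁽⁰⁾), ∇_w L_V(w⁽¹⁾)⟩ · λ⁽⁰⁾, evaluated with w⁽¹⁾ = Φ⁽¹⁾λ + φ₀. -/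
/-!
By the chain rule the gradient of `λ ↦ L_V(Φ₁ λ + φ₀)` is `Φ₁ᵀ ∇L_V(w₁)`. Since `Φ₁` differs
from `Φ₀` by the rank-one matrix `α gT λ₀ᵀ`, whose transpose sends `∇L_V(w₁)` to
`α ⟨gT, ∇L_V(w₁)⟩ λ₀`, the formula follows.
-/

open Matrix

/-- The paper's `∇_w L(w)`: the coordinate vector of the Fréchet derivative. -/
noncomputable def coordGrad {ι : Type*} [DecidableEq ι] (L : (ι → ℝ) → ℝ) (w : ι → ℝ) :
    ι → ℝ :=
  fun i => fderiv ℝ L w (Pi.single i 1)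

section

variable {ι κ : Type*} [Fintype ι] [DecidableEq ι]

theorem ContinuousLinearMap.apply_eq_dotProduct_single {R : Type*} [CommSemiring R]
    [TopologicalSpace R] (f : (ι → R) →L[R] R) (v : ι → R) :
    f v = v ⬝ᵥ fun i => f (Pi.single i 1) := by
  conv_lhs => rw [← Finset.univ_sum_single v]
  simp_rw [map_sum, dotProduct, ← smul_eq_mul, ← map_smul, ← Pi.single_smul', smul_eq_mul,
    mul_one]

theorem coordGrad_comp_mulVec_add [Fintype κ] [DecidableEq κ] (A : Matrix ι κ ℝ) (b : ι → ℝ)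
    {L : (ι → ℝ) → ℝ} {l : κ → ℝ} (hL : DifferentiableAt ℝ L (A *ᵥ l + b)) :
    coordGrad (fun l => L (A *ᵥ l + b)) l = Aᵀ *ᵥ coordGrad L (A *ᵥ l + b) := by
  have hA : HasFDerivAt (fun l => A *ᵥ l + b) (mulVecLin A).toContinuousLinearMap l :=
    (mulVecLin A).toContinuousLinearMap.hasFDerivAt.add_const b
  have hLA : HasFDerivAt (fun l => L (A *ᵥ l + b))
      ((fderiv ℝ L (A *ᵥ l + b)).comp (mulVecLin A).toContinuousLinearMap) l :=
    hL.hasFDerivAt.comp l hA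
  ext j
  rw [coordGrad, hLA.fderiv, ContinuousLinearMap.comp_apply, LinearMap.coe_toContinuousLinearMap',
    mulVecLin_apply, mulVec_single_one, ContinuousLinearMap.apply_eq_dotProduct_single]
  rfl

end

theorem transpose_sub_smul_vecMulVec_mulVec {ι κ R : Type*} [Fintype ι] [CommRing R]
    (M : Matrix ι κ R) (a : R) (u : ι → R) (v : κ → R) (g : ι → R) :
    (M - a • vecMulVec u v)ᵀ *ᵥ g = Mᵀ *ᵥ g - (a * (u ⬝ᵥ g)) • v := by
  rw [transpose_sub, transpose_smul, transpose_vecMulVec, sub_mulVec, smul_mulVec,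
    vecMulVec_mulVec, op_smul_eq_smul, smul_smul]

theorem uncentered_stn_hyperparameter_gradient_general {m h : ℕ}
    (Φ₀ : Matrix (Fin m) (Fin h) ℝ) (φ₀ : Fin m → ℝ)
    (lam₀ lam : Fin h → ℝ) (α : ℝ)
    (gT : Fin m → ℝ)
    (LV : (Fin m → ℝ) → ℝ)
    (Φ₁ : Matrix (Fin m) (Fin h) ℝ)
    (hΦ₁ : Φ₁ = Φ₀ - α • Matrix.vecMulVec gT lam₀)
    (w₁ : Fin m → ℝ) (hw₁ : w₁ = Φ₁.mulVec lam + φ₀)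
    (hLV : DifferentiableAt ℝ LV w₁)
    (gV : Fin m → ℝ) (hgV : ∀ i, gV i = fderiv ℝ LV w₁ (Pi.single i 1)) :
    (fun j => fderiv ℝ (fun l => LV (Φ₁.mulVec l + φ₀)) lam (Pi.single j 1)) =
      Φ₀ᵀ.mulVec gV - (α * (gT ⬝ᵥ gV)) • lam₀ := by
  have hgV_eq : gV = coordGrad LV w₁ := funext hgV
  subst hw₁
  calc coordGrad (fun l => LV (Φ₁ *ᵥ l + φ₀)) lam = Φ₁ᵀ *ᵥ gV := by
        rw [coordGrad_comp_mulVec_add Φ₁ φ₀ hLV, hgV_eq]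
    _ = Φ₀ᵀ *ᵥ gV - (α * (gT ⬝ᵥ gV)) • lam₀ := by
        rw [hΦ₁, transpose_sub_smul_vecMulVec_mulVec]

/-- One gradient descent step on the uncentered STN hypernetwork slope:
if `Φ⁽¹⁾ = Φ⁽⁰⁾ − α gT (λ⁽⁰⁾)ᵀ` where `gT = ∇_w L_T(λ⁽⁰⁾, w⁽⁰⁾)` with
`w⁽⁰⁾ = Φ⁽⁰⁾λ⁽⁰⁾ + φ₀`, then for any `λ` the gradient of
`λ ↦ L_V(Φ⁽¹⁾λ + φ₀)` equals
`(Φ⁽⁰⁾)ᵀ gV − α ⟨gT, gV⟩ λ⁽⁰⁾` where `gV = ∇_w L_V(w⁽¹⁾)`, `w⁽¹⁾ = Φ⁽¹⁾λ + φ₀`. -/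
theorem uncentered_stn_hyperparameter_gradient {m h : ℕ}
    (Φ₀ : Matrix (Fin m) (Fin h) ℝ) (φ₀ : Fin m → ℝ)
    (lam₀ lam : Fin h → ℝ) (α : ℝ) (hα : 0 < α)
    (gT : Fin m → ℝ)
    (LV : (Fin m → ℝ) → ℝ)
    (Φ₁ : Matrix (Fin m) (Fin h) ℝ)
    (hΦ₁ : Φ₁ = Φ₀ - α • Matrix.vecMulVec gT lam₀)
    (w₁ : Fin m → ℝ) (hw₁ : w₁ = Φ₁.mulVec lam + φ₀)
    (hLV : DifferentiableAt ℝ LV w₁)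
    (gV : Fin m → ℝ) (hgV : ∀ i, gV i = fderiv ℝ LV w₁ (Pi.single i 1)) :
    (fun j => fderiv ℝ (fun l => LV (Φ₁.mulVec l + φ₀)) lam (Pi.single j 1)) =
      Φ₀ᵀ.mulVec gV - (α * (gT ⬝ᵥ gV)) • lam₀ :=
  uncentered_stn_hyperparameter_gradient_general Φ₀ φ₀ lam₀ lam α gT LV Φ₁ hΦ₁ w₁ hw₁ hLV gV hgV
end

section
/- Linear regression with input dropout is equivalent in expectation to a form of ridge regression: if R ∈ ℝ^{n×m} has i.i.d. Bernoulli(p) entries and L(w) = E_R[(1/2n)‖(R ⊙ X)w − t‖²], then L(w) = (1/2n)‖pXw − t‖² + (p(1−p)/2n) wᵀ diag(XᵀX) w, where diag(XᵀX) is the diagonal matrix of column squared norms of X. -/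
/-!
Each residual `∑ⱼ R_ij X_ij w_j − t_i` is an affine function of independent Bernoulli(p)
variables, so by the bias–variance decomposition its expected square is the squared mean
`(p (Xw)_i − t_i)²` plus the variance `p(1−p) ∑ⱼ X_ij² w_j²`. Summing over `i` turns the
variance terms into `p(1−p) wᵀ diag(XᵀX) w`.
-/

open Matrix MeasureTheory ProbabilityTheory

lemma integral_sub_const_sq_eq_variance_add {Ω : Type*} {mΩ : MeasurableSpace Ω}
    {μ : Measure Ω} [IsProbabilityMeasure μ] {Y : Ω → ℝ} (hY : MemLp Y 2 μ) (b : ℝ) :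
    ∫ ω, (Y ω - b) ^ 2 ∂μ = Var[Y; μ] + (μ[Y] - b) ^ 2 := by
  have hYb : MemLp (fun ω => Y ω - b) 2 μ := hY.sub (memLp_const b)
  rw [← variance_sub_const hY.aestronglyMeasurable b, variance_eq_sub hYb,
    integral_sub (hY.integrable one_le_two) (integrable_const b)]
  simp

section Bernoulli

noncomputable def bernoulliReal (p : ℝ) : Measure ℝ :=
  ENNReal.ofReal p • Measure.dirac 1 + ENNReal.ofReal (1 - p) • Measure.dirac 0

variable {p : ℝ}

lemma isProbabilityMeasure_bernoulliReal (hp0 : 0 ≤ p) (hp1 : p ≤ 1) :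
    IsProbabilityMeasure (bernoulliReal p) := by
  constructor
  simp only [bernoulliReal, Measure.coe_add, Measure.coe_smul, Pi.add_apply, Pi.smul_apply,
    measure_univ, smul_eq_mul, mul_one]
  rw [← ENNReal.ofReal_add hp0 (by linarith)]
  norm_num

lemma integrable_bernoulliReal (f : ℝ → ℝ) : Integrable f (bernoulliReal p) :=
  ((integrable_dirac (by simp)).smul_measure ENNReal.ofReal_ne_top).add_measure
    ((integrable_dirac (by simp)).smul_measure ENNReal.ofReal_ne_top)

lemma integral_bernoulliReal (hp0 : 0 ≤ p) (hp1 : p ≤ 1) (f : ℝ → ℝ) :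
    ∫ x, f x ∂bernoulliReal p = p * f 1 + (1 - p) * f 0 := by
  rw [bernoulliReal, integral_add_measure
      ((integrable_dirac (by simp)).smul_measure ENNReal.ofReal_ne_top)
      ((integrable_dirac (by simp)).smul_measure ENNReal.ofReal_ne_top),
    integral_smul_measure, integral_smul_measure, integral_dirac, integral_dirac,
    ENNReal.toReal_ofReal hp0, ENNReal.toReal_ofReal (by linarith), smul_eq_mul, smul_eq_mul]

lemma memLp_id_bernoulliReal : MemLp id 2 (bernoulliReal p) :=
  (memLp_two_iff_integrable_sq aestronglyMeasurable_id).2 (integrable_bernoulliReal _)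

lemma variance_id_bernoulliReal (hp0 : 0 ≤ p) (hp1 : p ≤ 1) :
    Var[id; bernoulliReal p] = p * (1 - p) := by
  have := isProbabilityMeasure_bernoulliReal hp0 hp1
  rw [variance_eq_sub memLp_id_bernoulliReal]
  simp only [Pi.pow_apply, id, integral_bernoulliReal hp0 hp1]
  ring

end Bernoulli

section LinearFormOfCoordinates

variable {ι κ : Type*} [Fintype ι] [Fintype κ] {ν : Measure ℝ} [IsProbabilityMeasure ν]

lemma memLp_eval_mul_pi (hν : MemLp id 2 ν) (c : ι) (a : ℝ) :
    MemLp (fun r : ι → ℝ => r c * a) 2 (Measure.pi fun _ => ν) :=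
  (hν.comp_measurePreserving (measurePreserving_eval _ c)).mul_const a

lemma variance_eval_pi (c : ι) :
    Var[fun r : ι → ℝ => r c; Measure.pi fun _ => ν] = Var[id; ν] :=
  (measurePreserving_eval (fun _ => ν) c).variance_fun_comp (f := id) aemeasurable_id

lemma memLp_sum_eval_mul_pi (hν : MemLp id 2 ν) (e : κ → ι) (a : κ → ℝ) :
    MemLp (fun r : ι → ℝ => ∑ k, r (e k) * a k) 2 (Measure.pi fun _ => ν) :=
  memLp_finsetSum _ fun k _ => memLp_eval_mul_pi hν (e k) (a k)

lemma integral_sum_eval_mul_pi (hν : Integrable id ν) (e : κ → ι) (a : κ → ℝ) :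
    ∫ r : ι → ℝ, ∑ k, r (e k) * a k ∂(Measure.pi fun _ => ν) = (∫ x, x ∂ν) * ∑ k, a k := by
  rw [integral_finsetSum _ fun k _ => (integrable_eval hν).mul_const (a k), Finset.mul_sum]
  simp_rw [integral_mul_const, integral_eval]

lemma variance_sum_eval_mul_pi (hν : MemLp id 2 ν) {e : κ → ι} (he : Function.Injective e)
    (a : κ → ℝ) :
    Var[fun r : ι → ℝ => ∑ k, r (e k) * a k; Measure.pi fun _ => ν]
      = Var[id; ν] * ∑ k, a k ^ 2 := by
  have hindep : Set.Pairwise ↑(Finset.univ : Finset κ) fun k l =>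
      (fun r : ι → ℝ => r (e k) * a k) ⟂ᵢ[Measure.pi fun _ => ν] fun r => r (e l) * a l :=
    fun k _ l _ hkl => by
      exact ((iIndepFun_pi (μ := fun _ => ν) (𝓧 := fun _ => ℝ) (X := fun _ => id)
        fun _ => aemeasurable_id).indepFun (he.ne hkl)).comp
          (measurable_mul_const (a k)) (measurable_mul_const (a l))
  have hsum : (fun r : ι → ℝ => ∑ k, r (e k) * a k) = ∑ k, fun r => r (e k) * a k := by
    ext r
    simp
  rw [hsum, IndepFun.variance_sum (fun k _ => memLp_eval_mul_pi hν (e k) (a k)) hindep,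
    Finset.mul_sum]
  refine Finset.sum_congr rfl fun k _ => ?_
  rw [variance_mul_const, variance_eval_pi]

lemma integral_sum_eval_mul_sub_sq_pi (hν : MemLp id 2 ν) {e : κ → ι}
    (he : Function.Injective e) (a : κ → ℝ) (b : ℝ) :
    ∫ r : ι → ℝ, (∑ k, r (e k) * a k - b) ^ 2 ∂(Measure.pi fun _ => ν)
      = ((∫ x, x ∂ν) * ∑ k, a k - b) ^ 2 + Var[id; ν] * ∑ k, a k ^ 2 := by
  rw [integral_sub_const_sq_eq_variance_add (memLp_sum_eval_mul_pi hν e a),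
    variance_sum_eval_mul_pi hν he, integral_sum_eval_mul_pi (hν.integrable one_le_two), add_comm]

end LinearFormOfCoordinates

lemma Matrix.sum_transpose_mul_self_diag_mul_sq {n m : Type*} [Fintype n] [Fintype m]
    (X : Matrix n m ℝ) (w : m → ℝ) :
    ∑ j, (Xᵀ * X) j j * w j ^ 2 = ∑ i, ∑ j, (X i j * w j) ^ 2 := by
  simp_rw [mul_apply, transpose_apply, Finset.sum_mul]
  rw [Finset.sum_comm]
  exact Finset.sum_congr rfl fun i _ => Finset.sum_congr rfl fun j _ => by ring

theorem dropout_expected_loss_eq_ridge_general {n m : ℕ}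
    (X : Matrix (Fin n) (Fin m) ℝ) (t : Fin n → ℝ)
    (p : ℝ) (hp0 : 0 ≤ p) (hp1 : p ≤ 1)
    (ν : Measure ℝ)
    (hν : ν = ENNReal.ofReal p • Measure.dirac 1
      + ENNReal.ofReal (1 - p) • Measure.dirac 0)
    (μ : Measure (Fin n × Fin m → ℝ))
    (hμ : μ = Measure.pi fun _ => ν)
    (L : (Fin m → ℝ) → ℝ)
    (hL : ∀ w, L w = ∫ r,
      (1 / (2 * n)) * ∑ i, ((∑ j, r (i, j) * X i j * w j) - t i) ^ 2 ∂μ) :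
    ∀ w, L w =
      (1 / (2 * n)) * (∑ i, (p * X.mulVec w i - t i) ^ 2)
        + (p * (1 - p) / (2 * n)) * ∑ j, (Xᵀ * X) j j * (w j) ^ 2 := by
  intro w
  change ν = bernoulliReal p at hν
  subst hν hμ
  have := isProbabilityMeasure_bernoulliReal hp0 hp1
  have hrow : ∀ i, ∫ r, (∑ j, r (i, j) * X i j * w j - t i) ^ 2
      ∂(Measure.pi fun _ => bernoulliReal p)
      = (p * X.mulVec w i - t i) ^ 2 + p * (1 - p) * ∑ j, (X i j * w j) ^ 2 := fun i => by
    conv_lhs => simp only [mul_assoc]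
    rw [integral_sum_eval_mul_sub_sq_pi memLp_id_bernoulliReal (Prod.mk_right_injective i),
      variance_id_bernoulliReal hp0 hp1, integral_bernoulliReal hp0 hp1]
    simp [mulVec, dotProduct]
  rw [hL, integral_const_mul, integral_finsetSum _ fun i _ => ?_]
  · simp_rw [hrow, Finset.sum_add_distrib, ← Finset.mul_sum, sum_transpose_mul_self_diag_mul_sq]
    ring
  · simp only [mul_assoc]
    exact ((memLp_sum_eval_mul_pi memLp_id_bernoulliReal (Prod.mk i) fun j => X i j * w j).sub
      (memLp_const (t i))).integrable_sq

/-- Linear regression with input dropout is, in expectation, a form of ridge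
regression: if `R` has i.i.d. Bernoulli(p) entries (each entry is `1` with
probability `p` and `0` otherwise), then
`E_R[(1/2n)‖(R ⊙ X)w − t‖²] = (1/2n)‖pXw − t‖² + (p(1−p)/2n) wᵀ diag(XᵀX) w`. -/
theorem dropout_expected_loss_eq_ridge {n m : ℕ} (hn : 0 < n)
    (X : Matrix (Fin n) (Fin m) ℝ) (t : Fin n → ℝ)
    (p : ℝ) (hp0 : 0 ≤ p) (hp1 : p ≤ 1)
    (ν : Measure ℝ)
    (hν : ν = ENNReal.ofReal p • Measure.dirac 1
      + ENNReal.ofReal (1 - p) • Measure.dirac 0)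
    (μ : Measure (Fin n × Fin m → ℝ))
    (hμ : μ = Measure.pi fun _ => ν)
    (L : (Fin m → ℝ) → ℝ)
    (hL : ∀ w, L w = ∫ r,
      (1 / (2 * n)) * ∑ i, ((∑ j, r (i, j) * X i j * w j) - t i) ^ 2 ∂μ) :
    ∀ w, L w =
      (1 / (2 * n)) * (∑ i, (p * X.mulVec w i - t i) ^ 2)
        + (p * (1 - p) / (2 * n)) * ∑ j, (Xᵀ * X) j j * (w j) ^ 2 :=
  dropout_expected_loss_eq_ridge_general X t p hp0 hp1 ν hν μ hμ L hL
end
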